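/- For integers d ≥ 1 and 0 ≤ p ≤ d, define the set ∂_p(d) of 'regular' (p+1)-tuples from {0,1,…,d} as follows: for p = 2k even, ∂_p(d) consists of the tuples (0, i_1, i_1+1, i_2, i_2+1, …, i_k, i_k+1) with 1 ≤ i_1, i_{r+1} ≥ i_r + 2 for each 1 ≤ r < k, and i_k + 1 ≤ d (so ∂_0(d) = {(0)}); for p = 2k+1 odd, ∂_p(d) consists of the tuples (0, i_1, i_1+1, …, i_k, i_k+1, d) with 1 ≤ i_1, i_{r+1} ≥ i_r + 2 for each 1 ≤ r < k, and i_k + 1 ≤ d − 1 (so ∂_1(d) = {(0,d)}). For a function a : {0,…,d} → ℤ₂ and a tuple s = (v_0, v_1, …, v_p), set F(a, s) = a(v_0)·∏_{r=1}^{p} (a(v_{r−1}) + a(v_r)) ∈ ℤ₂. Then Σ_{p=0}^{d} Σ_{s ∈ ∂_p(d)} F(a, s) = ∏_{i=0}^{d} a(i) in ℤ₂. -/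
import Mathlib

/-- The list `[i_1, i_1+1, i_2, i_2+1, …, i_k, i_k+1]` of consecutive pairs determined by
a tuple `i : Fin k → Fin (d+1)`. -/
def pairsList {d k : ℕ} (i : Fin k → Fin (d + 1)) : List ℕ :=
  (List.ofFn (fun r => [((i r : ℕ)), (i r : ℕ) + 1])).flatten

open Classical in
/-- The parameters of the regular `2k`-tuples in `{0,…,d}`: tuples `i_1 < i_2 < ⋯ < i_k`
with `1 ≤ i_1`, `i_{r+1} ≥ i_r + 2` for each `1 ≤ r < k`, and `i_k + 1 ≤ d`. -/
noncomputable def evenParams (d k : ℕ) : Finset (Fin k → Fin (d + 1)) :=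
  Finset.univ.filter (fun i =>
    (∀ h : 0 < k, 1 ≤ (i ⟨0, h⟩ : ℕ) ∧
      (i ⟨k - 1, Nat.sub_lt h Nat.one_pos⟩ : ℕ) + 1 ≤ d) ∧
    ∀ (r : ℕ) (h : r + 1 < k),
      (i ⟨r, Nat.lt_of_succ_lt h⟩ : ℕ) + 2 ≤ (i ⟨r + 1, h⟩ : ℕ))

open Classical in
/-- The parameters of the regular `(2k+1)`-tuples in `{0,…,d}`: tuples
`i_1 < i_2 < ⋯ < i_k` with `1 ≤ i_1`, `i_{r+1} ≥ i_r + 2` for each `1 ≤ r < k`, and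
`i_k + 1 ≤ d − 1`. -/
noncomputable def oddParams (d k : ℕ) : Finset (Fin k → Fin (d + 1)) :=
  Finset.univ.filter (fun i =>
    (∀ h : 0 < k, 1 ≤ (i ⟨0, h⟩ : ℕ) ∧
      (i ⟨k - 1, Nat.sub_lt h Nat.one_pos⟩ : ℕ) + 1 ≤ d - 1) ∧
    ∀ (r : ℕ) (h : r + 1 < k),
      (i ⟨r, Nat.lt_of_succ_lt h⟩ : ℕ) + 2 ≤ (i ⟨r + 1, h⟩ : ℕ))

/-- The set `∂_p(d)` of regular `(p+1)`-tuples from `{0,1,…,d}`: for `p = 2k` even, the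
tuples `(0, i_1, i_1+1, …, i_k, i_k+1)`, and for `p = 2k+1` odd, the tuples
`(0, i_1, i_1+1, …, i_k, i_k+1, d)`, with the constraints of `evenParams`/`oddParams`. -/
noncomputable def regularTuples (d p : ℕ) : Finset (List ℕ) :=
  if p % 2 = 0 then
    (evenParams d (p / 2)).image (fun i => 0 :: pairsList i)
  else
    (oddParams d (p / 2)).image (fun i => (0 :: pairsList i) ++ [d])

/-- `F(a, (v_0,…,v_p)) = a(v_0)·∏_{r=1}^{p} (a(v_{r−1}) + a(v_r))`, the value of the
simplicial cochain `a ∪ δa ∪ ⋯ ∪ δa` (with `p` factors of `δa`) on `⟨v_0 ⋯ v_p⟩`. -/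
def Fval (a : ℕ → ZMod 2) (s : List ℕ) : ZMod 2 :=
  (s.head?.elim 1 a) * ((s.zip s.tail).foldr (fun p acc => (a p.1 + a p.2) * acc) 1)

namespace RS
variable (a : ℕ → ZMod 2)

/-! ### Computation of `Fval` on regular tuples -/

def Pdiff (s : List ℕ) : ZMod 2 := (s.zip s.tail).foldr (fun p acc => (a p.1 + a p.2) * acc) 1

def coef (b : Bool) (v : ℕ) : ZMod 2 := if b then 1 + a v else a v

def alt : Bool → List ℕ → ZMod 2
  | _, [] => 1
  | b, y :: l => coef a (!b) y * alt (!b) l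

lemma coef_key : ∀ (b : Bool) (x y : ZMod 2),
    (if b then 1 + x else x) * (x + y) = (if b then 1 + x else x) * (if !b then 1 + y else y) := by
  decide

lemma pivot : ∀ (l : List ℕ) (b : Bool) (v : ℕ),
    coef a b v * Pdiff a (v :: l) = coef a b v * alt a b l
  | [], b, v => by simp [Pdiff, alt]
  | y :: l, b, v => by
    have h1 : Pdiff a (v :: y :: l) = (a v + a y) * Pdiff a (y :: l) := rfl
    have h2 : coef a b v * (a v + a y) = coef a b v * coef a (!b) y := coef_key b (a v) (a y)
    calc coef a b v * Pdiff a (v :: y :: l)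
        = (coef a b v * (a v + a y)) * Pdiff a (y :: l) := by rw [h1]; ring
      _ = (coef a b v * coef a (!b) y) * Pdiff a (y :: l) := by rw [h2]
      _ = coef a b v * (coef a (!b) y * Pdiff a (y :: l)) := by ring
      _ = coef a b v * (coef a (!b) y * alt a (!b) l) := by rw [pivot l (!b) y]
      _ = coef a b v * alt a b (y :: l) := rfl

def pw (y : ℕ) : ZMod 2 := (1 + a y) * a (y + 1)

def w (l : List ℕ) : ZMod 2 := (l.map (pw a)).prod

def Wk {d k : ℕ} (i : Fin k → Fin (d+1)) : ZMod 2 := ∏ r, pw a (i r)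

lemma pairsList_cons {d k : ℕ} (i : Fin (k+1) → Fin (d+1)) :
    pairsList i = (i 0 : ℕ) :: ((i 0 : ℕ) + 1) :: pairsList (fun r => i r.succ) := by
  simp [pairsList, List.ofFn_succ]

lemma pairsList_nil {d : ℕ} (i : Fin 0 → Fin (d+1)) : pairsList i = [] := by
  simp [pairsList]

lemma alt_pairs {d : ℕ} : ∀ {k : ℕ} (i : Fin k → Fin (d+1)) (t : List ℕ),
    alt a false (pairsList i ++ t) = Wk a i * alt a false t := by
  intro k
  induction k with
  | zero => intro i t; simp [pairsList_nil, Wk]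
  | succ k ih =>
    intro i t
    rw [pairsList_cons]
    show alt a false (((i 0 : ℕ)) :: ((i 0 : ℕ) + 1) :: (pairsList (fun r => i r.succ) ++ t)) = _
    have : alt a false (((i 0 : ℕ)) :: ((i 0 : ℕ) + 1) :: (pairsList (fun r => i r.succ) ++ t))
        = pw a (i 0) * alt a false (pairsList (fun r => i r.succ) ++ t) := by
      show coef a true _ * (coef a false _ * _) = _
      simp only [coef, pw, if_true, if_neg (by decide : ¬ (false = true)), Bool.not_false,
        Bool.not_true]
      ring
    rw [this, ih]
    simp only [Wk, Fin.prod_univ_succ]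
    ring

lemma Fval_eq_even {d k : ℕ} (i : Fin k → Fin (d+1)) :
    Fval a (0 :: pairsList i) = a 0 * Wk a i := by
  have h0 : Fval a (0 :: pairsList i) = coef a false 0 * Pdiff a (0 :: pairsList i) := by
    simp [Fval, coef, Pdiff]
  rw [h0, pivot]
  have : pairsList i = pairsList i ++ [] := by simp
  rw [this, alt_pairs]
  simp [coef, alt]

lemma Fval_eq_odd {d k : ℕ} (i : Fin k → Fin (d+1)) :
    Fval a ((0 :: pairsList i) ++ [d]) = a 0 * Wk a i * (1 + a d) := by
  have h0 : Fval a (0 :: (pairsList i ++ [d])) = coef a false 0 * Pdiff a (0 :: (pairsList i ++ [d])) := by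
    simp [Fval, coef, Pdiff]
  rw [List.cons_append, h0, pivot, alt_pairs]
  show a 0 * (Wk a i * (coef a true d * alt a true [])) = _
  simp [coef, alt]
  ring

lemma pairsList_inj {d : ℕ} : ∀ {k : ℕ} (i j : Fin k → Fin (d+1)),
    pairsList i = pairsList j → i = j := by
  intro k
  induction k with
  | zero => intro i j _; funext r; exact r.elim0
  | succ k ih =>
    intro i j h
    rw [pairsList_cons, pairsList_cons] at h
    injection h with h1 h2
    injection h2 with _ h3
    have e0 : i 0 = j 0 := Fin.ext h1
    have etail := ih _ _ h3
    funext r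
    refine Fin.cases e0 (fun r => ?_) r
    exact congrFun etail r

/-! ### The recursive family of gap-2 lists -/

def L : ℕ → Finset (List ℕ)
  | 0 => {[]}
  | 1 => {[]}
  | (m+2) => L (m+1) ∪ (L m).image (· ++ [m+1])

def Good (m : ℕ) (l : List ℕ) : Prop :=
  l.Pairwise (fun x y => x + 2 ≤ y) ∧ ∀ x ∈ l, 1 ≤ x ∧ x + 1 ≤ m

lemma good_mono {m m' : ℕ} (h : m ≤ m') {l : List ℕ} (hl : Good m l) : Good m' l :=
  ⟨hl.1, fun x hx => ⟨(hl.2 x hx).1, le_trans (hl.2 x hx).2 h⟩⟩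

lemma mem_L_iff : ∀ (m : ℕ) (l : List ℕ), l ∈ L m ↔ Good m l := by
  intro m
  induction m using Nat.strong_induction_on with
  | _ m ih =>
    match m with
    | 0 =>
      intro l
      constructor
      · rintro h
        simp only [L, Finset.mem_singleton] at h
        subst h; exact ⟨List.Pairwise.nil, by simp⟩
      · rintro ⟨-, h2⟩
        cases l with
        | nil => simp [L]
        | cons x l => exact absurd (h2 x (by simp)) (by omega)
    | 1 =>
      intro l
      constructor
      · rintro h
        simp only [L, Finset.mem_singleton] at h
        subst h; exact ⟨List.Pairwise.nil, by simp⟩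
      · rintro ⟨-, h2⟩
        cases l with
        | nil => simp [L]
        | cons x l => exact absurd (h2 x (by simp)) (by omega)
    | (m+2) =>
      intro l
      constructor
      · intro h
        simp only [L, Finset.mem_union, Finset.mem_image] at h
        rcases h with h | ⟨l', hl', rfl⟩
        · exact good_mono (by omega) ((ih (m+1) (by omega) l).1 h)
        · have hg : Good m l' := (ih m (by omega) l').1 hl'
          constructor
          · rw [List.pairwise_append]
            refine ⟨hg.1, by simp, ?_⟩
            intro x hx y hy
            simp only [List.mem_singleton] at hy
            subst hy
            have := hg.2 x hx
            omega
          · intro x hx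
            rcases List.mem_append.1 hx with hx | hx
            · have := hg.2 x hx; omega
            · simp only [List.mem_singleton] at hx; omega
      · rintro ⟨h1, h2⟩
        by_cases hb : ∀ x ∈ l, x + 1 ≤ m + 1
        · have : l ∈ L (m+1) := (ih (m+1) (by omega) l).2 ⟨h1, fun x hx => ⟨(h2 x hx).1, hb x hx⟩⟩
          simp only [L, Finset.mem_union]
          exact Or.inl this
        · push_neg at hb
          obtain ⟨x, hx, hxm⟩ := hb
          have hxe : x = m + 1 := by have := h2 x hx; omega
          subst hxe
          obtain ⟨l₁, l₂, rfl⟩ := List.append_of_mem hx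
          rw [List.pairwise_append] at h1
          have h2' : l₂ = [] := by
            cases l₂ with
            | nil => rfl
            | cons y l₂ =>
              exfalso
              have hy := (List.pairwise_cons.1 h1.2.1).1 y (by simp)
              have := h2 y (by simp)
              omega
          subst h2'
          simp only [L, Finset.mem_union, Finset.mem_image]
          refine Or.inr ⟨l₁, ?_, rfl⟩
          refine (ih m (by omega) l₁).2 ⟨h1.1, ?_⟩
          intro x hx
          have := h1.2.2 x hx (m+1) (by simp)
          have := h2 x (List.mem_append_left _ hx)
          omega

lemma length_le_of_mem_L : ∀ (m : ℕ) (l : List ℕ), l ∈ L m → l.length ≤ m := by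
  intro m
  induction m using Nat.strong_induction_on with
  | _ m ih =>
    match m with
    | 0 => intro l hl; simp only [L, Finset.mem_singleton] at hl; simp [hl]
    | 1 => intro l hl; simp only [L, Finset.mem_singleton] at hl; simp [hl]
    | (m+2) =>
      intro l hl
      simp only [L, Finset.mem_union, Finset.mem_image] at hl
      rcases hl with h | ⟨l', hl', rfl⟩
      · have := ih (m+1) (by omega) l h; omega
      · have := ih m (by omega) l' hl'; simp; omega

def T (m : ℕ) : ZMod 2 := ∑ l ∈ L m, w a l

lemma T_rec (m : ℕ) : T a (m+2) = T a (m+1) + (1 + a (m+1)) * a (m+2) * T a m := by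
  have hdisj : Disjoint (L (m+1)) ((L m).image (· ++ [m+1])) := by
    rw [Finset.disjoint_right]
    rintro l hl hl'
    simp only [Finset.mem_image] at hl
    obtain ⟨l', hl'', rfl⟩ := hl
    have hg := (mem_L_iff (m+1) _).1 hl'
    have := hg.2 (m+1) (List.mem_append_right l' (by simp))
    omega
  have : T a (m+2) = ∑ l ∈ L (m+1), w a l + ∑ l ∈ (L m).image (· ++ [m+1]), w a l := by
    rw [T]
    show ∑ l ∈ L (m+1) ∪ (L m).image (· ++ [m+1]), w a l = _
    exact Finset.sum_union hdisj
  rw [this, Finset.sum_image (by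
    intro x hx y hy hxy
    have := congrArg List.dropLast hxy
    simpa [List.dropLast_concat] using this)]
  have : ∀ l, w a (l ++ [m+1]) = w a l * ((1 + a (m+1)) * a (m+2)) := by
    intro l
    simp [w, pw]
  simp only [this]
  rw [← Finset.sum_mul,
    show (∑ l ∈ L (m+1), w a l) = T a (m+1) from rfl,
    show (∑ l ∈ L m, w a l) = T a m from rfl]
  ring

lemma T_key : ∀ m : ℕ, T a (m+1) + (1 + a (m+1)) * T a m = ∏ i ∈ Finset.range (m+1), a (i+1) := by
  have hxx : ∀ x : ZMod 2, x + x = 0 := by decide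
  intro m
  induction m with
  | zero =>
    show T a 1 + (1 + a 1) * T a 0 = _
    have h0 : T a 0 = 1 := by simp [T, L, w]
    have h1 : T a 1 = 1 := by simp [T, L, w]
    rw [h0, h1, Finset.prod_range_one]
    linear_combination hxx 1
  | succ m ih =>
    rw [T_rec, Finset.prod_range_succ, ← ih]
    linear_combination hxx (T a (m+1))

/-! ### The parameter sets as a common family -/

open Classical in
noncomputable def Pset (d m k : ℕ) : Finset (Fin k → Fin (d + 1)) :=
  Finset.univ.filter (fun i =>
    (∀ h : 0 < k, 1 ≤ (i ⟨0, h⟩ : ℕ) ∧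
      (i ⟨k - 1, Nat.sub_lt h Nat.one_pos⟩ : ℕ) + 1 ≤ m) ∧
    ∀ (r : ℕ) (h : r + 1 < k),
      (i ⟨r, Nat.lt_of_succ_lt h⟩ : ℕ) + 2 ≤ (i ⟨r + 1, h⟩ : ℕ))

lemma evenParams_eq (d k : ℕ) : evenParams d k = Pset d d k := rfl
lemma oddParams_eq (d k : ℕ) : oddParams d k = Pset d (d - 1) k := rfl

open Classical in
lemma mem_Pset {d m k : ℕ} {i : Fin k → Fin (d+1)} :
    i ∈ Pset d m k ↔
      ((∀ h : 0 < k, 1 ≤ (i ⟨0, h⟩ : ℕ) ∧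
        (i ⟨k - 1, Nat.sub_lt h Nat.one_pos⟩ : ℕ) + 1 ≤ m) ∧
      ∀ (r : ℕ) (h : r + 1 < k),
        (i ⟨r, Nat.lt_of_succ_lt h⟩ : ℕ) + 2 ≤ (i ⟨r + 1, h⟩ : ℕ)) := by
  simp [Pset]

lemma gap_mono (k : ℕ) (g : ℕ → ℕ)
    (hgap : ∀ r, r + 1 < k → g r + 2 ≤ g (r + 1)) :
    ∀ s r, s < k → r < s → g r + 2 ≤ g s := by
  intro s
  induction s with
  | zero => intro r _ hr; omega
  | succ s ihs =>
    intro r hs hr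
    rcases Nat.lt_or_ge r s with h | h
    · have h1 := ihs r (by omega) h
      have h2 := hgap s hs
      omega
    · have : r = s := by omega
      subst this
      exact hgap r hs

lemma gap_lb (k : ℕ) (g : ℕ → ℕ) (h0 : 0 < k → 1 ≤ g 0)
    (hgap : ∀ r, r + 1 < k → g r + 2 ≤ g (r + 1)) :
    ∀ r, r < k → 2 * r + 1 ≤ g r := by
  intro r
  induction r with
  | zero => intro h; exact h0 h
  | succ r ihr =>
    intro h
    have := ihr (by omega)
    have := hgap r (by omega)
    omega

lemma Pset_bounds {d m k : ℕ} {i : Fin k → Fin (d+1)} (hi : i ∈ Pset d m k) :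
    (∀ r s : Fin k, r < s → (i r : ℕ) + 2 ≤ (i s : ℕ)) ∧
    (∀ r : Fin k, 1 ≤ (i r : ℕ) ∧ (i r : ℕ) + 1 ≤ m) := by
  obtain ⟨hA, hB⟩ := mem_Pset.1 hi
  set G : ℕ → ℕ := fun r => if h : r < k then (i ⟨r, h⟩ : ℕ) else 0 with hG
  have hGv : ∀ (r : ℕ) (h : r < k), G r = (i ⟨r, h⟩ : ℕ) := fun r h => dif_pos h
  have hgap : ∀ r, r + 1 < k → G r + 2 ≤ G (r + 1) := by
    intro r h
    rw [hGv r (by omega), hGv (r+1) h]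
    exact hB r h
  have hmono := gap_mono k G hgap
  have hval : ∀ r : Fin k, G r.val = (i r : ℕ) := fun r => hGv r.val r.isLt
  constructor
  · intro r s hrs
    have := hmono s.val r.val s.isLt hrs
    rw [hval r, hval s] at this
    omega
  · intro r
    have hk : 0 < k := r.pos
    obtain ⟨h0, hlast⟩ := hA hk
    have h0' : 1 ≤ G 0 := by rw [hGv 0 hk]; exact h0
    have hlast' : G (k-1) + 1 ≤ m := by rw [hGv (k-1) (by omega)]; exact hlast
    have hle0 : 1 ≤ G r.val := by
      rcases Nat.eq_zero_or_pos r.val with h | h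
      · rw [h]; exact h0'
      · have := hmono r.val 0 r.isLt h; omega
    have hlek : G r.val + 1 ≤ m := by
      rcases Nat.lt_or_ge r.val (k-1) with h | h
      · have := hmono (k-1) r.val (by omega) h; omega
      · have : r.val = k - 1 := by have := r.isLt; omega
        rw [this]; exact hlast'
    rw [hval r] at hle0 hlek
    exact ⟨hle0, hlek⟩

lemma Pset_empty (d m k : ℕ) (hk : 0 < k) (h : m < 2 * k) : Pset d m k = ∅ := by
  rw [Finset.eq_empty_iff_forall_notMem]
  intro i hi
  obtain ⟨hpw, hbd⟩ := Pset_bounds hi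
  obtain ⟨h1, h2⟩ := hbd ⟨k-1, by omega⟩
  set G : ℕ → ℕ := fun r => if h : r < k then (i ⟨r, h⟩ : ℕ) else 0 with hG
  have hGv : ∀ (r : ℕ) (h : r < k), G r = (i ⟨r, h⟩ : ℕ) := fun r h => dif_pos h
  have hlb := gap_lb k G
    (fun hk' => by rw [hGv 0 hk']; exact (hbd ⟨0, hk'⟩).1)
    (fun r hr => by
      rw [hGv r (by omega), hGv (r+1) hr]
      exact hpw ⟨r, by omega⟩ ⟨r+1, hr⟩ (by simp [Fin.lt_def]))
    (k-1) (by omega)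
  rw [hGv (k-1) (by omega)] at hlb
  omega

lemma paramBij (d m k : ℕ) (hmd : m ≤ d) :
    ∑ i ∈ Pset d m k, Wk a i = ∑ l ∈ (L m).filter (fun l => l.length = k), w a l := by
  refine Finset.sum_nbij' (i := fun i => List.ofFn (fun r => (i r : ℕ)))
    (j := fun l => fun r => (⟨min (l.getD r 0) d, by omega⟩ : Fin (d+1)))
    ?_ ?_ ?_ ?_ ?_
  · -- maps to
    intro i hi
    obtain ⟨hpw, hbd⟩ := Pset_bounds hi
    rw [Finset.mem_filter]
    refine ⟨(mem_L_iff m _).2 ⟨?_, ?_⟩, by simp⟩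
    · exact List.pairwise_ofFn.2 fun r s hrs => hpw r s hrs
    · intro x hx
      rw [List.mem_ofFn] at hx
      obtain ⟨r, rfl⟩ := hx
      exact hbd r
  · -- inverse maps to
    intro l hl
    rw [Finset.mem_filter] at hl
    obtain ⟨hL, hlen⟩ := hl
    obtain ⟨hpw, hbd⟩ := (mem_L_iff m l).1 hL
    rw [mem_Pset]
    have hget : ∀ (n : ℕ) (h : n < k), l.getD n 0 = l[n]'(by omega) := by
      intro n h
      exact List.getD_eq_getElem l 0 (by omega)
    have hmem : ∀ (n : ℕ) (h : n < k), 1 ≤ (l[n]'(by omega)) ∧ (l[n]'(by omega)) + 1 ≤ m := by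
      intro n h
      exact hbd _ (List.getElem_mem _)
    have hminv : ∀ (n : ℕ) (h : n < k), min (l.getD n 0) d = l[n]'(by omega) := by
      intro n h
      rw [hget n h]
      have := hmem n h
      omega
    constructor
    · intro hk
      constructor
      · simp only [hminv 0 hk]
        exact (hmem 0 hk).1
      · simp only [hminv (k-1) (by omega)]
        have := (hmem (k-1) (by omega)).2
        omega
    · intro r h
      simp only [hminv r (by omega), hminv (r+1) h]
      have := List.pairwise_iff_getElem.1 hpw r (r+1) (by omega) (by omega) (by omega)
      exact this
  · -- left inverse
    intro i hi
    funext r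
    apply Fin.ext
    show min ((List.ofFn fun r => (i r : ℕ)).getD r 0) d = (i r : ℕ)
    rw [List.getD_eq_getElem _ 0 (by simp [r.isLt]), List.getElem_ofFn]
    simp only [Fin.eta]
    exact Nat.min_eq_left (Fin.is_le _)
  · -- right inverse
    intro l hl
    rw [Finset.mem_filter] at hl
    obtain ⟨hL, hlen⟩ := hl
    obtain ⟨hpw, hbd⟩ := (mem_L_iff m l).1 hL
    apply List.ext_getElem
    · simp [hlen]
    · intro n h1 h2
      simp only [List.getElem_ofFn]
      show min (l.getD n 0) d = l[n]
      have h3 : l.getD n 0 = l[n] := List.getD_eq_getElem l 0 h2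
      have hmem : l[n] ∈ l := List.getElem_mem h2
      have h4 := hbd (l[n]'h2) hmem
      clear h1
      omega
  · -- values
    intro i hi
    rw [Wk, w, List.map_ofFn, List.prod_ofFn]
    rfl

lemma sum_Pset (d m : ℕ) (hmd : m ≤ d) :
    ∑ k ∈ Finset.range (d+1), ∑ i ∈ Pset d m k, Wk a i = T a m := by
  calc ∑ k ∈ Finset.range (d+1), ∑ i ∈ Pset d m k, Wk a i
      = ∑ k ∈ Finset.range (d+1), ∑ l ∈ (L m).filter (fun l => l.length = k), w a l :=
        Finset.sum_congr rfl (fun k _ => paramBij a d m k hmd)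
    _ = ∑ l ∈ L m, w a l := Finset.sum_fiberwise_of_maps_to
        (fun l hl => Finset.mem_range.2 (by
          have := length_le_of_mem_L m l hl; omega)) _

/-! ### Sums over regular tuples -/

lemma g_even (d k : ℕ) :
    ∑ s ∈ regularTuples d (2*k), Fval a s = a 0 * ∑ i ∈ Pset d d k, Wk a i := by
  rw [regularTuples, if_pos (by omega : 2*k % 2 = 0), (by omega : 2*k/2 = k), evenParams_eq]
  rw [Finset.sum_image (by
    intro x hx y hy h
    injection h with _ h'
    exact pairsList_inj x y h')]
  rw [Finset.mul_sum]
  exact Finset.sum_congr rfl fun i _ => Fval_eq_even a i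

lemma g_odd (d k : ℕ) :
    ∑ s ∈ regularTuples d (2*k+1), Fval a s
      = (a 0 * (1 + a d)) * ∑ i ∈ Pset d (d-1) k, Wk a i := by
  rw [regularTuples, if_neg (by omega : ¬ (2*k+1) % 2 = 0), (by omega : (2*k+1)/2 = k),
    oddParams_eq]
  rw [Finset.sum_image (by
    intro x hx y hy h
    have h2 := congrArg List.dropLast h
    simp only [List.dropLast_concat] at h2
    injection h2 with _ h'
    exact pairsList_inj x y h')]
  rw [Finset.mul_sum]
  exact Finset.sum_congr rfl fun i _ => by rw [Fval_eq_odd]; ring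

lemma sum_range_even_odd {M : Type*} [AddCommMonoid M] (g : ℕ → M) (n : ℕ) :
    ∑ p ∈ Finset.range (2*n), g p
      = ∑ k ∈ Finset.range n, g (2*k) + ∑ k ∈ Finset.range n, g (2*k+1) := by
  induction n with
  | zero => simp
  | succ n ih =>
    rw [show 2*(n+1) = (2*n)+1+1 by ring, Finset.sum_range_succ, Finset.sum_range_succ, ih,
      Finset.sum_range_succ, Finset.sum_range_succ]
    abel

end RS

/-- For `d ≥ 1` and any `a : {0,…,d} → ℤ₂`,
`Σ_{p=0}^{d} Σ_{s ∈ ∂_p(d)} F(a, s) = ∏_{i=0}^{d} a(i)` in `ℤ₂`. -/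
theorem regular_simplices_sum (d : ℕ) (hd : 1 ≤ d) (a : ℕ → ZMod 2) :
    ∑ p ∈ Finset.range (d + 1), ∑ s ∈ regularTuples d p, Fval a s
      = ∏ i ∈ Finset.range (d + 1), a i := by
  have hzero : ∀ p ∈ Finset.range (2*(d+1)), p ∉ Finset.range (d+1) →
      (∑ s ∈ regularTuples d p, Fval a s) = 0 := by
    intro p _ hp
    rw [Finset.mem_range, not_lt] at hp
    have hempty : regularTuples d p = ∅ := by
      rcases Nat.even_or_odd p with ⟨k, hk⟩ | ⟨k, hk⟩
      · have h1 : p % 2 = 0 := by omega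
        have h2 : p / 2 = k := by omega
        rw [regularTuples, if_pos h1, h2, RS.evenParams_eq,
          RS.Pset_empty d d k (by omega) (by omega), Finset.image_empty]
      · have h1 : ¬ p % 2 = 0 := by omega
        have h2 : p / 2 = k := by omega
        rw [regularTuples, if_neg h1, h2, RS.oddParams_eq,
          RS.Pset_empty d (d-1) k (by omega) (by omega), Finset.image_empty]
    rw [hempty, Finset.sum_empty]
  rw [Finset.sum_subset (Finset.range_subset_range.2 (by omega)) hzero, RS.sum_range_even_odd]
  have he : ∑ k ∈ Finset.range (d+1), ∑ s ∈ regularTuples d (2*k), Fval a s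
      = a 0 * RS.T a d := by
    calc ∑ k ∈ Finset.range (d+1), ∑ s ∈ regularTuples d (2*k), Fval a s
        = ∑ k ∈ Finset.range (d+1), a 0 * ∑ i ∈ RS.Pset d d k, RS.Wk a i :=
          Finset.sum_congr rfl fun k _ => RS.g_even a d k
      _ = a 0 * ∑ k ∈ Finset.range (d+1), ∑ i ∈ RS.Pset d d k, RS.Wk a i :=
          (Finset.mul_sum _ _ _).symm
      _ = a 0 * RS.T a d := by rw [RS.sum_Pset a d d le_rfl]
  have ho : ∑ k ∈ Finset.range (d+1), ∑ s ∈ regularTuples d (2*k+1), Fval a s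
      = (a 0 * (1 + a d)) * RS.T a (d-1) := by
    calc ∑ k ∈ Finset.range (d+1), ∑ s ∈ regularTuples d (2*k+1), Fval a s
        = ∑ k ∈ Finset.range (d+1), (a 0 * (1 + a d)) * ∑ i ∈ RS.Pset d (d-1) k, RS.Wk a i :=
          Finset.sum_congr rfl fun k _ => RS.g_odd a d k
      _ = (a 0 * (1 + a d)) * ∑ k ∈ Finset.range (d+1), ∑ i ∈ RS.Pset d (d-1) k, RS.Wk a i :=
          (Finset.mul_sum _ _ _).symm
      _ = (a 0 * (1 + a d)) * RS.T a (d-1) := by rw [RS.sum_Pset a d (d-1) (by omega)]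
  rw [he, ho]
  obtain ⟨e, rfl⟩ : ∃ e, d = e + 1 := ⟨d - 1, by omega⟩
  have hT := RS.T_key a e
  rw [Finset.prod_range_succ']
  have hsub : e + 1 - 1 = e := rfl
  rw [hsub, ← hT]
  ring
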